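/- Consider a closed Hilbert complex segment (W0, W1, W2, d0, d1, V0, V1) with harmonic space H and graph norms ‖·‖_{V0}, ‖·‖_{V1}. Let F : V1 → W1 be monotone (⟨F v − F v', v − v'⟩ ≥ 0 for all v, v' ∈ V1) and hemicontinuous (for all u, v ∈ V1 and w ∈ W1, t ↦ ⟨F(u + t v), w⟩ is continuous on [0,1]). Suppose (σ, u, p) ∈ V0 × V1 × H solves the mixed semilinear problem with datum f ∈ W1, and suppose F is locally Lipschitz at u + p with respect to the V-norm: there exist constants C_F, M > 0 such that ‖F(u + p) − F v'‖ ≤ C_F ‖(u + p) − v'‖_{V1} whenever v' ∈ V1 satisfies ‖(u + p) − v'‖_{V1} ≤ M. Then there exist δ > 0 and C > 0 such that for every f' ∈ W1 with ‖f − f'‖ ≤ δ, any solution (σ', u', p') ∈ V0 × V1 × H of the mixed semilinear problem with datum f' satisfies ‖σ − σ'‖_{V0} + ‖u − u'‖_{V1} + ‖p − p'‖ ≤ C ‖f − f'‖. -/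

import Mathlib

/-!
Subtracting the two problems gives error equations for `(σ - σ', u - u', p - p')` with datum
`f - f'` and forcing `F (u' + p') - F (u + p)`. Testing them with `(u - u') + (p - p')` and using
the monotonicity of `F` gives an energy inequality, and the Poincaré inequality of the complex
(which follows from the closed-range hypotheses by the open mapping theorem) bounds `‖u - u'‖` by
`‖σ - σ'‖ + ‖d1 (u - u')‖`. Together they bound every error except `d0 (σ - σ')` by
`O(‖f - f'‖)`, with no use of the Lipschitz condition. For `f'` close to `f` this puts `u' + p'`
in the ball where `F` is Lipschitz, and testing with `d0 (σ - σ')` bounds the remaining term.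
-/

open scoped RealInnerProductSpace

section

variable {W0 W1 W2 : Type*}
  [NormedAddCommGroup W0] [InnerProductSpace ℝ W0] [CompleteSpace W0]
  [NormedAddCommGroup W1] [InnerProductSpace ℝ W1] [CompleteSpace W1]
  [NormedAddCommGroup W2] [InnerProductSpace ℝ W2] [CompleteSpace W2]

/-- Membership in the harmonic space `H = {w ∈ V1 : d1 w = 0, w ⟂ d0(V0)}`. -/
def IsHarmonic (V0 : Submodule ℝ W0) {V1 : Submodule ℝ W1}
    (d0 : V0 →ₗ[ℝ] W1) (d1 : V1 →ₗ[ℝ] W2) (q : V1) : Prop :=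
  d1 q = 0 ∧ ∀ τ : V0, ⟪(q : W1), d0 τ⟫ = 0

/-- The graph (V-)norm `‖τ‖_{V0} = (‖τ‖² + ‖d0 τ‖²)^{1/2}` on the domain of `d0`. -/
noncomputable def graphNorm0 {V0 : Submodule ℝ W0} (d0 : V0 →ₗ[ℝ] W1) (τ : V0) : ℝ :=
  Real.sqrt (‖(τ : W0)‖ ^ 2 + ‖d0 τ‖ ^ 2)

/-- The graph (V-)norm `‖v‖_{V1} = (‖v‖² + ‖d1 v‖²)^{1/2}` on the domain of `d1`. -/
noncomputable def graphNorm1 {V1 : Submodule ℝ W1} (d1 : V1 →ₗ[ℝ] W2) (v : V1) : ℝ :=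
  Real.sqrt (‖(v : W1)‖ ^ 2 + ‖d1 v‖ ^ 2)

/-- `(σ, u, p)` solves the mixed semilinear problem with nonlinearity `F` and
datum `f`. -/
def IsMixedSemilinearSolution (V0 : Submodule ℝ W0) {V1 : Submodule ℝ W1}
    (d0 : V0 →ₗ[ℝ] W1) (d1 : V1 →ₗ[ℝ] W2) (F : V1 → W1) (f : W1)
    (σ : V0) (u p : V1) : Prop :=
  IsHarmonic V0 d0 d1 p ∧
  (∀ τ : V0, ⟪(σ : W0), (τ : W0)⟫ - ⟪(u : W1), d0 τ⟫ = 0) ∧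
  (∀ v : V1, ⟪d0 σ, (v : W1)⟫ + ⟪d1 u, d1 v⟫ + ⟪(p : W1), (v : W1)⟫ +
      ⟪F (u + p), (v : W1)⟫ = ⟪f, (v : W1)⟫) ∧
  (∀ q : V1, IsHarmonic V0 d0 d1 q → ⟪(u : W1), (q : W1)⟫ = 0)

end

theorem exists_preimage_norm_le_of_isClosed_graph {𝕜 E F : Type*} [NontriviallyNormedField 𝕜]
    [NormedAddCommGroup E] [NormedSpace 𝕜 E] [CompleteSpace E]
    [NormedAddCommGroup F] [NormedSpace 𝕜 F] [CompleteSpace F]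
    {V : Submodule 𝕜 E} (d : V →ₗ[𝕜] F)
    (hgraph : IsClosed {p : E × F | ∃ v : V, (v : E) = p.1 ∧ d v = p.2})
    (hrange : IsClosed (Set.range d)) :
    ∃ c > 0, ∀ y ∈ Set.range d, ∃ v : V, d v = y ∧ ‖(v : E)‖ ≤ c * ‖y‖ := by
  let G := LinearMap.range (V.subtype.prod d)
  have hG : (G : Set (E × F)) = {p | ∃ v : V, (v : E) = p.1 ∧ d v = p.2} := by
    ext ⟨x, y⟩
    simp [G, Prod.ext_iff]
  have : CompleteSpace G := (hG ▸ hgraph).completeSpace_coe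
  have : CompleteSpace (LinearMap.range d) := by
    rw [← LinearMap.coe_range] at hrange
    exact hrange.completeSpace_coe
  let π : G →L[𝕜] LinearMap.range d :=
    ((ContinuousLinearMap.snd 𝕜 E F).comp G.subtypeL).codRestrict _
      (by rintro ⟨_, v, rfl⟩; exact ⟨v, rfl⟩)
  have hπ : Function.Surjective π := by
    rintro ⟨_, v, rfl⟩
    exact ⟨⟨_, v, rfl⟩, rfl⟩
  obtain ⟨c, hc, hpre⟩ := π.exists_preimage_norm_le hπ
  refine ⟨c, hc, ?_⟩
  rintro _ ⟨v₀, rfl⟩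
  obtain ⟨⟨_, v, rfl⟩, hv, hnorm⟩ := hpre ⟨d v₀, v₀, rfl⟩
  exact ⟨v, congrArg Subtype.val hv, (norm_fst_le _).trans hnorm⟩

lemma le_of_sq_le_mul {x y : ℝ} (hy : 0 ≤ y) (h : x ^ 2 ≤ x * y) : x ≤ y := by
  nlinarith

lemma add_add_le_of_sq_add_sq_add_sq_le {a b c k : ℝ} (hk : 0 ≤ k)
    (h : a ^ 2 + b ^ 2 + c ^ 2 ≤ k * (a + b + c)) : a + b + c ≤ 3 * k :=
  le_of_sq_le_mul (by positivity) <| by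
    nlinarith [sq_nonneg (a - b), sq_nonneg (b - c), sq_nonneg (a - c)]

section HilbertComplex

variable {W0 W1 W2 : Type*}
  [NormedAddCommGroup W0] [InnerProductSpace ℝ W0]
  [NormedAddCommGroup W1] [InnerProductSpace ℝ W1]
  [NormedAddCommGroup W2] [InnerProductSpace ℝ W2]

lemma graphNorm0_le {V0 : Submodule ℝ W0} (d0 : V0 →ₗ[ℝ] W1) (τ : V0) :
    graphNorm0 d0 τ ≤ ‖(τ : W0)‖ + ‖d0 τ‖ :=
  (Real.sqrt_le_left (by positivity)).2 <| by
    nlinarith [norm_nonneg (τ : W0), norm_nonneg (d0 τ)]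

lemma graphNorm1_le {V1 : Submodule ℝ W1} (d1 : V1 →ₗ[ℝ] W2) (v : V1) :
    graphNorm1 d1 v ≤ ‖(v : W1)‖ + ‖d1 v‖ :=
  (Real.sqrt_le_left (by positivity)).2 <| by
    nlinarith [norm_nonneg (v : W1), norm_nonneg (d1 v)]

variable {V0 : Submodule ℝ W0} {V1 : Submodule ℝ W1} {d0 : V0 →ₗ[ℝ] W1} {d1 : V1 →ₗ[ℝ] W2}

lemma IsHarmonic.sub {p p' : V1} (hp : IsHarmonic V0 d0 d1 p) (hp' : IsHarmonic V0 d0 d1 p') :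
    IsHarmonic V0 d0 d1 (p - p') :=
  ⟨by rw [map_sub, hp.1, hp'.1, sub_self], fun τ => by
    rw [Submodule.coe_sub, inner_sub_left, hp.2 τ, hp'.2 τ, sub_self]⟩

lemma graphNorm1_add_le_of_isHarmonic (v : V1) {q : V1} (hq : IsHarmonic V0 d0 d1 q) :
    graphNorm1 d1 (v + q) ≤ ‖(v : W1)‖ + ‖(q : W1)‖ + ‖d1 v‖ := by
  have hnorm : ‖((v + q : V1) : W1)‖ ≤ ‖(v : W1)‖ + ‖(q : W1)‖ := norm_add_le _ _
  have hd1 : d1 (v + q) = d1 v := by rw [map_add, hq.1, add_zero]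
  have := graphNorm1_le d1 (v + q)
  rw [hd1] at this
  linarith

lemma inner_eq_zero_of_d1_eq_zero [(LinearMap.range d0).HasOrthogonalProjection]
    (hsub : ∀ τ : V0, d0 τ ∈ V1) (hdd : ∀ τ : V0, d1 ⟨d0 τ, hsub τ⟩ = 0) {w z : V1}
    (hwB : ∀ τ : V0, ⟪(w : W1), d0 τ⟫ = 0)
    (hwH : ∀ q : V1, IsHarmonic V0 d0 d1 q → ⟪(w : W1), (q : W1)⟫ = 0) (hz : d1 z = 0) :
    ⟪(w : W1), (z : W1)⟫ = 0 := by
  obtain ⟨τ, hτ⟩ := (LinearMap.range d0).starProjection_apply_mem (z : W1)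
  -- removing from `z` its component in `d0 V0` leaves a harmonic element
  have hq : IsHarmonic V0 d0 d1 (z - ⟨d0 τ, hsub τ⟩) := by
    refine ⟨by rw [map_sub, hz, hdd, sub_self], fun τ' => ?_⟩
    change ⟪(z : W1) - d0 τ, d0 τ'⟫ = 0
    rw [hτ]
    exact Submodule.starProjection_inner_eq_zero _ _ ⟨τ', rfl⟩
  have h := hwH _ hq
  rwa [Submodule.coe_sub, inner_sub_right, Submodule.coe_mk, hwB, sub_zero] at h

lemma norm_le_mul_norm_d1_of_orthogonal [(LinearMap.range d0).HasOrthogonalProjection]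
    (hsub : ∀ τ : V0, d0 τ ∈ V1) (hdd : ∀ τ : V0, d1 ⟨d0 τ, hsub τ⟩ = 0) {c1 : ℝ}
    (hd1 : ∀ y ∈ Set.range d1, ∃ v : V1, d1 v = y ∧ ‖(v : W1)‖ ≤ c1 * ‖y‖) {w : V1}
    (hwB : ∀ τ : V0, ⟪(w : W1), d0 τ⟫ = 0)
    (hwH : ∀ q : V1, IsHarmonic V0 d0 d1 q → ⟪(w : W1), (q : W1)⟫ = 0) :
    ‖(w : W1)‖ ≤ c1 * ‖d1 w‖ := by
  obtain ⟨v, hv, hvw⟩ := hd1 (d1 w) ⟨w, rfl⟩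
  have h := inner_eq_zero_of_d1_eq_zero hsub hdd hwB hwH (z := w - v)
    (by rw [map_sub, hv, sub_self])
  rw [Submodule.coe_sub, inner_sub_right, real_inner_self_eq_norm_sq, sub_eq_zero] at h
  refine le_of_sq_le_mul ((norm_nonneg _).trans hvw) ?_
  calc ‖(w : W1)‖ ^ 2 = ⟪(w : W1), (v : W1)⟫ := h
    _ ≤ ‖(w : W1)‖ * ‖(v : W1)‖ := real_inner_le_norm _ _
    _ ≤ ‖(w : W1)‖ * (c1 * ‖d1 w‖) := mul_le_mul_of_nonneg_left hvw (norm_nonneg _)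

lemma norm_starProjection_range_le [(LinearMap.range d0).HasOrthogonalProjection] {c0 : ℝ}
    (hc0 : 0 ≤ c0) (hd0 : ∀ y ∈ Set.range d0, ∃ τ : V0, d0 τ = y ∧ ‖(τ : W0)‖ ≤ c0 * ‖y‖)
    {v : W1} {σ : W0} (hvσ : ∀ τ : V0, ⟪v, d0 τ⟫ = ⟪σ, (τ : W0)⟫) :
    ‖(LinearMap.range d0).starProjection v‖ ≤ c0 * ‖σ‖ := by
  set b := (LinearMap.range d0).starProjection v
  obtain ⟨τ, hτ, hτb⟩ := hd0 b ((LinearMap.range d0).starProjection_apply_mem v)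
  have hb : ⟪v - b, b⟫ = 0 :=
    Submodule.starProjection_inner_eq_zero _ _ ((LinearMap.range d0).starProjection_apply_mem v)
  rw [inner_sub_left, real_inner_self_eq_norm_sq, sub_eq_zero] at hb
  refine le_of_sq_le_mul (by positivity) ?_
  calc ‖b‖ ^ 2 = ⟪σ, (τ : W0)⟫ := by rw [← hb, ← hτ, hvσ]
    _ ≤ ‖σ‖ * ‖(τ : W0)‖ := real_inner_le_norm _ _
    _ ≤ ‖σ‖ * (c0 * ‖b‖) := mul_le_mul_of_nonneg_left hτb (norm_nonneg _)
    _ = ‖b‖ * (c0 * ‖σ‖) := by ring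

lemma norm_le_of_inner_d0_eq [(LinearMap.range d0).HasOrthogonalProjection]
    (hsub : ∀ τ : V0, d0 τ ∈ V1) (hdd : ∀ τ : V0, d1 ⟨d0 τ, hsub τ⟩ = 0) {c0 c1 : ℝ}
    (hc0 : 0 ≤ c0) (hd0 : ∀ y ∈ Set.range d0, ∃ τ : V0, d0 τ = y ∧ ‖(τ : W0)‖ ≤ c0 * ‖y‖)
    (hd1 : ∀ y ∈ Set.range d1, ∃ v : V1, d1 v = y ∧ ‖(v : W1)‖ ≤ c1 * ‖y‖) {v : V1} {σ : W0}
    (hvσ : ∀ τ : V0, ⟪(v : W1), d0 τ⟫ = ⟪σ, (τ : W0)⟫)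
    (hvH : ∀ q : V1, IsHarmonic V0 d0 d1 q → ⟪(v : W1), (q : W1)⟫ = 0) :
    ‖(v : W1)‖ ≤ c0 * ‖σ‖ + c1 * ‖d1 v‖ := by
  set b := (LinearMap.range d0).starProjection (v : W1)
  obtain ⟨τ, hτ⟩ := (LinearMap.range d0).starProjection_apply_mem (v : W1)
  set w : V1 := v - ⟨d0 τ, hsub τ⟩
  have hw : (w : W1) = v - b := by
    change (v : W1) - d0 τ = v - b
    rw [hτ]
  have hwB : ∀ τ' : V0, ⟪(w : W1), d0 τ'⟫ = 0 := fun τ' => by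
    rw [hw]; exact Submodule.starProjection_inner_eq_zero _ _ ⟨τ', rfl⟩
  have hwH : ∀ q : V1, IsHarmonic V0 d0 d1 q → ⟪(w : W1), (q : W1)⟫ = 0 := fun q hq => by
    rw [Submodule.coe_sub, inner_sub_left, hvH q hq, Submodule.coe_mk, real_inner_comm, hq.2 τ,
      sub_zero]
  have hd1w : d1 w = d1 v := by rw [map_sub, hdd, sub_zero]
  calc ‖(v : W1)‖ = ‖b + (w : W1)‖ := by rw [hw, add_sub_cancel]
    _ ≤ ‖b‖ + ‖(w : W1)‖ := norm_add_le _ _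
    _ ≤ c0 * ‖σ‖ + c1 * ‖d1 v‖ := add_le_add (norm_starProjection_range_le hc0 hd0 hvσ)
        (hd1w ▸ norm_le_mul_norm_d1_of_orthogonal hsub hdd hd1 hwB hwH)

theorem exists_poincare_inequality [CompleteSpace W0] [CompleteSpace W1] [CompleteSpace W2]
    (hgraph0 : IsClosed {p : W0 × W1 | ∃ τ : V0, (τ : W0) = p.1 ∧ d0 τ = p.2})
    (hgraph1 : IsClosed {p : W1 × W2 | ∃ v : V1, (v : W1) = p.1 ∧ d1 v = p.2})
    (hsub : ∀ τ : V0, d0 τ ∈ V1) (hdd : ∀ τ : V0, d1 ⟨d0 τ, hsub τ⟩ = 0)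
    (hd0closed : IsClosed (Set.range d0)) (hd1closed : IsClosed (Set.range d1)) :
    ∃ c ≥ 1, ∀ (v : V1) (σ : W0), (∀ τ : V0, ⟪(v : W1), d0 τ⟫ = ⟪σ, (τ : W0)⟫) →
      (∀ q : V1, IsHarmonic V0 d0 d1 q → ⟪(v : W1), (q : W1)⟫ = 0) →
      ‖(v : W1)‖ ≤ c * (‖σ‖ + ‖d1 v‖) := by
  obtain ⟨c0, hc0, hd0⟩ := exists_preimage_norm_le_of_isClosed_graph d0 hgraph0 hd0closed
  obtain ⟨c1, -, hd1⟩ := exists_preimage_norm_le_of_isClosed_graph d1 hgraph1 hd1closed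
  have : CompleteSpace (LinearMap.range d0) := by
    rw [← LinearMap.coe_range] at hd0closed
    exact hd0closed.completeSpace_coe
  refine ⟨max (max c0 c1) 1, le_max_right _ _, fun v σ hvσ hvH => ?_⟩
  calc ‖(v : W1)‖ ≤ c0 * ‖σ‖ + c1 * ‖d1 v‖ :=
        norm_le_of_inner_d0_eq hsub hdd hc0.le hd0 hd1 hvσ hvH
    _ ≤ max (max c0 c1) 1 * ‖σ‖ + max (max c0 c1) 1 * ‖d1 v‖ := by gcongr <;> simp
    _ = max (max c0 c1) 1 * (‖σ‖ + ‖d1 v‖) := by ring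

variable {F : V1 → W1} {f f' : W1} {σ σ' : V0} {u u' p p' : V1}

namespace IsMixedSemilinearSolution

lemma inner_sub_d0 (hsol : IsMixedSemilinearSolution V0 d0 d1 F f σ u p)
    (hsol' : IsMixedSemilinearSolution V0 d0 d1 F f' σ' u' p') (τ : V0) :
    ⟪((u - u' : V1) : W1), d0 τ⟫ = ⟪((σ - σ' : V0) : W0), (τ : W0)⟫ := by
  have h := hsol.2.1 τ
  have h' := hsol'.2.1 τ
  simp only [Submodule.coe_sub, inner_sub_left]
  linarith

lemma inner_sub_harmonic (hsol : IsMixedSemilinearSolution V0 d0 d1 F f σ u p)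
    (hsol' : IsMixedSemilinearSolution V0 d0 d1 F f' σ' u' p') {q : V1}
    (hq : IsHarmonic V0 d0 d1 q) : ⟪((u - u' : V1) : W1), (q : W1)⟫ = 0 := by
  rw [Submodule.coe_sub, inner_sub_left, hsol.2.2.2 q hq, hsol'.2.2.2 q hq, sub_self]

lemma error_eq (hsol : IsMixedSemilinearSolution V0 d0 d1 F f σ u p)
    (hsol' : IsMixedSemilinearSolution V0 d0 d1 F f' σ' u' p') (v : V1) :
    ⟪d0 (σ - σ'), (v : W1)⟫ + ⟪d1 (u - u'), d1 v⟫ + ⟪((p - p' : V1) : W1), (v : W1)⟫ +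
      ⟪F (u + p) - F (u' + p'), (v : W1)⟫ = ⟪f - f', (v : W1)⟫ := by
  have h := hsol.2.2.1 v
  have h' := hsol'.2.2.1 v
  simp only [map_sub, Submodule.coe_sub, inner_sub_left]
  linarith

lemma energy_le (hFmono : ∀ v v' : V1, 0 ≤ ⟪F v - F v', (v : W1) - (v' : W1)⟫)
    (hsol : IsMixedSemilinearSolution V0 d0 d1 F f σ u p)
    (hsol' : IsMixedSemilinearSolution V0 d0 d1 F f' σ' u' p') :
    ‖((σ - σ' : V0) : W0)‖ ^ 2 + ‖d1 (u - u')‖ ^ 2 + ‖((p - p' : V1) : W1)‖ ^ 2 ≤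
      ‖f - f'‖ * (‖((u - u' : V1) : W1)‖ + ‖((p - p' : V1) : W1)‖) := by
  have hp := hsol.1.sub hsol'.1
  have h := hsol.error_eq hsol' ((u - u') + (p - p'))
  have hσu : ⟪d0 (σ - σ'), ((u - u' : V1) : W1)⟫ = ‖((σ - σ' : V0) : W0)‖ ^ 2 := by
    rw [real_inner_comm, hsol.inner_sub_d0 hsol', real_inner_self_eq_norm_sq]
  have hσp : ⟪d0 (σ - σ'), ((p - p' : V1) : W1)⟫ = 0 := by
    rw [real_inner_comm]; exact hp.2 _
  have hpu : ⟪((p - p' : V1) : W1), ((u - u' : V1) : W1)⟫ = 0 := by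
    rw [real_inner_comm]; exact hsol.inner_sub_harmonic hsol' hp
  have hmono : 0 ≤ ⟪F (u + p) - F (u' + p'), ((u - u' + (p - p') : V1) : W1)⟫ := by
    convert hFmono (u + p) (u' + p') using 2
    simp only [Submodule.coe_add, Submodule.coe_sub]
    abel
  have hf : ⟪f - f', ((u - u' + (p - p') : V1) : W1)⟫ ≤
      ‖f - f'‖ * (‖((u - u' : V1) : W1)‖ + ‖((p - p' : V1) : W1)‖) :=
    (real_inner_le_norm _ _).trans (mul_le_mul_of_nonneg_left (norm_add_le _ _) (norm_nonneg _))
  rw [map_add, hp.1, add_zero, Submodule.coe_add, inner_add_right, inner_add_right, hσu, hσp,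
    hpu, real_inner_self_eq_norm_sq, real_inner_self_eq_norm_sq] at h
  rw [Submodule.coe_add] at hmono hf
  linarith

lemma norm_errors_le (hFmono : ∀ v v' : V1, 0 ≤ ⟪F v - F v', (v : W1) - (v' : W1)⟫)
    (hsol : IsMixedSemilinearSolution V0 d0 d1 F f σ u p)
    (hsol' : IsMixedSemilinearSolution V0 d0 d1 F f' σ' u' p') {c : ℝ} (hc : 1 ≤ c)
    (hu : ‖((u - u' : V1) : W1)‖ ≤ c * (‖((σ - σ' : V0) : W0)‖ + ‖d1 (u - u')‖)) :
    ‖((σ - σ' : V0) : W0)‖ + ‖d1 (u - u')‖ + ‖((p - p' : V1) : W1)‖ ≤ 3 * c * ‖f - f'‖ := by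
  have hp : ‖((p - p' : V1) : W1)‖ ≤ c * ‖((p - p' : V1) : W1)‖ :=
    le_mul_of_one_le_left (norm_nonneg _) hc
  have hE := (hsol.energy_le hFmono hsol').trans
    (mul_le_mul_of_nonneg_left (add_le_add hu hp) (norm_nonneg (f - f')))
  have := add_add_le_of_sq_add_sq_add_sq_le (k := c * ‖f - f'‖) (by positivity)
    (hE.trans_eq (by ring))
  linarith

lemma norm_d0_sub_le (hsub : ∀ τ : V0, d0 τ ∈ V1) (hdd : ∀ τ : V0, d1 ⟨d0 τ, hsub τ⟩ = 0)
    (hsol : IsMixedSemilinearSolution V0 d0 d1 F f σ u p)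
    (hsol' : IsMixedSemilinearSolution V0 d0 d1 F f' σ' u' p') :
    ‖d0 (σ - σ')‖ ≤ ‖f - f'‖ + ‖F (u + p) - F (u' + p')‖ := by
  have h := hsol.error_eq hsol' ⟨d0 (σ - σ'), hsub _⟩
  rw [hdd, inner_zero_right, Submodule.coe_mk, (hsol.1.sub hsol'.1).2,
    real_inner_self_eq_norm_sq] at h
  have hsq : ‖d0 (σ - σ')‖ ^ 2 = ⟪(f - f') - (F (u + p) - F (u' + p')), d0 (σ - σ')⟫ := by
    rw [inner_sub_left]; linarith
  calc ‖d0 (σ - σ')‖ ≤ ‖(f - f') - (F (u + p) - F (u' + p'))‖ :=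
        le_of_sq_le_mul (norm_nonneg _) <|
          hsq.le.trans ((real_inner_le_norm _ _).trans_eq (mul_comm _ _))
    _ ≤ ‖f - f'‖ + ‖F (u + p) - F (u' + p')‖ := norm_sub_le _ _

end IsMixedSemilinearSolution

end HilbertComplex

section

variable {W0 W1 W2 : Type*}
  [NormedAddCommGroup W0] [InnerProductSpace ℝ W0] [CompleteSpace W0]
  [NormedAddCommGroup W1] [InnerProductSpace ℝ W1] [CompleteSpace W1]
  [NormedAddCommGroup W2] [InnerProductSpace ℝ W2] [CompleteSpace W2]

theorem mixed_semilinear_local_lipschitz_stability_general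
    (V0 : Submodule ℝ W0) (V1 : Submodule ℝ W1)
    (d0 : V0 →ₗ[ℝ] W1) (d1 : V1 →ₗ[ℝ] W2)
    (hgraph0 : IsClosed {p : W0 × W1 | ∃ τ : V0, (τ : W0) = p.1 ∧ d0 τ = p.2})
    (hgraph1 : IsClosed {p : W1 × W2 | ∃ v : V1, (v : W1) = p.1 ∧ d1 v = p.2})
    (hsub : ∀ τ : V0, d0 τ ∈ V1)
    (hdd : ∀ τ : V0, d1 ⟨d0 τ, hsub τ⟩ = 0)
    (hBclosed : IsClosed (Set.range (⇑d0)))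
    (hd1closed : IsClosed (Set.range (⇑d1)))
    -- the nonlinearity: monotone and hemicontinuous
    (F : V1 → W1)
    (hFmono : ∀ v v' : V1, 0 ≤ ⟪F v - F v', (v : W1) - (v' : W1)⟫)
    -- a solution with datum `f`
    (f : W1) (σ : V0) (u p : V1)
    (hsol : IsMixedSemilinearSolution V0 d0 d1 F f σ u p)
    -- `F` is locally Lipschitz at `u + p` in the `V`-norm
    (CF M : ℝ) (hCF : 0 < CF) (hM : 0 < M)
    (hFloc : ∀ v' : V1, graphNorm1 d1 (u + p - v') ≤ M →
      ‖F (u + p) - F v'‖ ≤ CF * graphNorm1 d1 (u + p - v')) :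
    ∃ δ C : ℝ, 0 < δ ∧ 0 < C ∧
      ∀ (f' : W1) (σ' : V0) (u' p' : V1), ‖f - f'‖ ≤ δ →
        IsMixedSemilinearSolution V0 d0 d1 F f' σ' u' p' →
        graphNorm0 d0 (σ - σ') + graphNorm1 d1 (u - u') + ‖((p - p' : V1) : W1)‖ ≤
          C * ‖f - f'‖ := by
  obtain ⟨c, hc, hpoincare⟩ :=
    exists_poincare_inequality hgraph0 hgraph1 hsub hdd hBclosed hd1closed
  have hK : 0 < 3 * c ^ 2 + 3 * c := by positivity
  refine ⟨M / (3 * c ^ 2 + 3 * c), 1 + (1 + CF) * (3 * c ^ 2 + 3 * c), by positivity,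
    by positivity, fun f' σ' u' p' hδ hsol' => ?_⟩
  have hu := hpoincare _ _ (hsol.inner_sub_d0 hsol') fun q hq => hsol.inner_sub_harmonic hsol' hq
  have herr := hsol.norm_errors_le hFmono hsol' hc hu
  have hu' : ‖((u - u' : V1) : W1)‖ ≤ 3 * c ^ 2 * ‖f - f'‖ := by
    nlinarith [norm_nonneg ((p - p' : V1) : W1)]
  have hgraph : graphNorm1 d1 (u + p - (u' + p')) ≤ (3 * c ^ 2 + 3 * c) * ‖f - f'‖ := by
    rw [show u + p - (u' + p') = (u - u') + (p - p') by abel]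
    linarith [graphNorm1_add_le_of_isHarmonic (u - u') (hsol.1.sub hsol'.1),
      norm_nonneg ((σ - σ' : V0) : W0)]
  have hF := (hFloc _ (hgraph.trans ((le_div_iff₀' hK).1 hδ))).trans
    (mul_le_mul_of_nonneg_left hgraph hCF.le)
  linarith [graphNorm0_le d0 (σ - σ'), graphNorm1_le d1 (u - u'),
    hsol.norm_d0_sub_le hsub hdd hsol']

/-- **Local well-posedness of the mixed semilinear problem under a local Lipschitz
condition** (Section 4.5 of the paper): if `F` is monotone, hemicontinuous, and
locally Lipschitz at the solution `u + p` with respect to the `V`-norm, then for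
all data `f'` sufficiently close to `f`, any solution of the mixed semilinear
problem with datum `f'` satisfies the Lipschitz stability estimate. -/
theorem mixed_semilinear_local_lipschitz_stability
    (V0 : Submodule ℝ W0) (V1 : Submodule ℝ W1)
    (d0 : V0 →ₗ[ℝ] W1) (d1 : V1 →ₗ[ℝ] W2)
    (hV0dense : Dense (V0 : Set W0)) (hV1dense : Dense (V1 : Set W1))
    (hgraph0 : IsClosed {p : W0 × W1 | ∃ τ : V0, (τ : W0) = p.1 ∧ d0 τ = p.2})
    (hgraph1 : IsClosed {p : W1 × W2 | ∃ v : V1, (v : W1) = p.1 ∧ d1 v = p.2})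
    (hsub : ∀ τ : V0, d0 τ ∈ V1)
    (hdd : ∀ τ : V0, d1 ⟨d0 τ, hsub τ⟩ = 0)
    (hBclosed : IsClosed (Set.range (⇑d0)))
    (hd1closed : IsClosed (Set.range (⇑d1)))
    -- the nonlinearity: monotone and hemicontinuous
    (F : V1 → W1)
    (hFmono : ∀ v v' : V1, 0 ≤ ⟪F v - F v', (v : W1) - (v' : W1)⟫)
    (hFhemi : ∀ u v : V1, ∀ w : W1,
      ContinuousOn (fun t : ℝ => ⟪F (u + t • v), w⟫) (Set.Icc 0 1))
    -- a solution with datum `f`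
    (f : W1) (σ : V0) (u p : V1)
    (hsol : IsMixedSemilinearSolution V0 d0 d1 F f σ u p)
    -- `F` is locally Lipschitz at `u + p` in the `V`-norm
    (CF M : ℝ) (hCF : 0 < CF) (hM : 0 < M)
    (hFloc : ∀ v' : V1, graphNorm1 d1 (u + p - v') ≤ M →
      ‖F (u + p) - F v'‖ ≤ CF * graphNorm1 d1 (u + p - v')) :
    ∃ δ C : ℝ, 0 < δ ∧ 0 < C ∧
      ∀ (f' : W1) (σ' : V0) (u' p' : V1), ‖f - f'‖ ≤ δ →
        IsMixedSemilinearSolution V0 d0 d1 F f' σ' u' p' →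
        graphNorm0 d0 (σ - σ') + graphNorm1 d1 (u - u') + ‖((p - p' : V1) : W1)‖ ≤
          C * ‖f - f'‖ :=
  mixed_semilinear_local_lipschitz_stability_general V0 V1 d0 d1 hgraph0 hgraph1 hsub hdd hBclosed
    hd1closed F hFmono f σ u p hsol CF M hCF hM hFloc

end
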